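/- For any real 3×3 matrix A whose polar decomposition is A = R₀√(AᵗA) with R₀ ∈ SO(3), if the eigenvalues of √(AᵗA) are α₁, α₂, α₃ and λᵢ := αᵢ − 1, then dist²(A, SO(3)) = λ₁² + λ₂² + λ₃², and in particular dist²(A, SO(3)) ≤ ‖A − I₃‖² in the Frobenius norm. -/
import Mathlib

/-- Squared Frobenius norm of a real 3×3 matrix. -/
noncomputable def frobSq (M : Matrix (Fin 3) (Fin 3) ℝ) : ℝ := ∑ i, ∑ j, (M i j) ^ 2

/-- The special orthogonal group SO(3), as a set of matrices. -/
def SO3 : Set (Matrix (Fin 3) (Fin 3) ℝ) := {R | R.transpose * R = 1 ∧ R.det = 1}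

/-- Squared Frobenius distance from a matrix to SO(3). -/
noncomputable def distSO3Sq (A : Matrix (Fin 3) (Fin 3) ℝ) : ℝ :=
  sInf {t : ℝ | ∃ R ∈ SO3, t = frobSq (A - R)}

open Matrix

lemma frobSq_eq_trace (M : Matrix (Fin 3) (Fin 3) ℝ) : frobSq M = (Mᵀ * M).trace := by
  simp only [frobSq, Matrix.trace, Matrix.diag_apply, Matrix.mul_apply,
    Matrix.transpose_apply, sq]
  exact Finset.sum_comm

lemma orth_mul {M N : Matrix (Fin 3) (Fin 3) ℝ} (hM : Mᵀ * M = 1) (hN : Nᵀ * N = 1) :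
    (M * N)ᵀ * (M * N) = 1 := by
  rw [Matrix.transpose_mul, Matrix.mul_assoc, ← Matrix.mul_assoc Mᵀ, hM, Matrix.one_mul, hN]

lemma orth_comm {M : Matrix (Fin 3) (Fin 3) ℝ} (hM : Mᵀ * M = 1) : M * Mᵀ = 1 :=
  mul_eq_one_comm.mp hM

lemma orth_transpose {M : Matrix (Fin 3) (Fin 3) ℝ} (hM : Mᵀ * M = 1) :
    (Mᵀ)ᵀ * Mᵀ = 1 := by rw [Matrix.transpose_transpose]; exact orth_comm hM

lemma orth_diag_le_one {Q : Matrix (Fin 3) (Fin 3) ℝ} (hQ : Qᵀ * Q = 1) (i : Fin 3) :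
    Q i i ≤ 1 := by
  have h1 : (Q * Qᵀ) i i = 1 := by rw [orth_comm hQ]; simp [Matrix.one_apply]
  have h2 : ∑ j, (Q i j) ^ 2 = 1 := by
    rw [← h1]; simp [Matrix.mul_apply, Matrix.transpose_apply, sq]
  have h3 : (Q i i) ^ 2 ≤ 1 := by
    rw [← h2]
    exact Finset.single_le_sum (fun j _ => sq_nonneg (Q i j)) (Finset.mem_univ i)
  nlinarith

theorem distance_to_SO3 (A R₀ S U : Matrix (Fin 3) (Fin 3) ℝ) (α : Fin 3 → ℝ)
    (hR : R₀ ∈ SO3) (hS : S.PosSemidef) (hSS : S * S = A.transpose * A)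
    (hpolar : A = R₀ * S)
    (hU : U.transpose * U = 1) (hdiag : S = U * Matrix.diagonal α * U.transpose) :
    distSO3Sq A = ∑ i, (α i - 1) ^ 2 ∧ distSO3Sq A ≤ frobSq (A - 1) := by
  have hUU : U * Uᵀ = 1 := orth_comm hU
  -- diagonal α = Uᵀ * S * U
  have cancel1 : ∀ X : Matrix (Fin 3) (Fin 3) ℝ, Uᵀ * (U * X) = X := fun X => by
    rw [← Matrix.mul_assoc, hU, Matrix.one_mul]
  have cancel2 : ∀ X : Matrix (Fin 3) (Fin 3) ℝ, X * Uᵀ * U = X := fun X => by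
    rw [Matrix.mul_assoc, hU, Matrix.mul_one]
  have hD : Matrix.diagonal α = Uᵀ * S * U := by
    rw [hdiag, Matrix.mul_assoc U, cancel1, cancel2]
  -- eigenvalues are nonneg
  have hα : ∀ i, 0 ≤ α i := by
    have hpsd : (Matrix.diagonal α).PosSemidef := by
      rw [hD]
      have := hS.conjTranspose_mul_mul_same U
      simpa using this
    exact Matrix.posSemidef_diagonal_iff.mp hpsd
  -- trace(AᵀA) = ∑ α i ^ 2
  have htrD2 : (Matrix.diagonal α * Matrix.diagonal α).trace = ∑ i, α i ^ 2 := by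
    simp [Matrix.diagonal_mul_diagonal, Matrix.trace_diagonal, sq]
  have hSSdiag : S * S = U * (Matrix.diagonal α * Matrix.diagonal α) * Uᵀ := by
    rw [hdiag, Matrix.mul_assoc (U * Matrix.diagonal α),
      Matrix.mul_assoc U (Matrix.diagonal α) Uᵀ, cancel1]
    noncomm_ring
  have htrAA : (Aᵀ * A).trace = ∑ i, α i ^ 2 := by
    rw [← hSS, hSSdiag, ← htrD2, Matrix.trace_mul_comm, ← Matrix.mul_assoc, hU, Matrix.one_mul]
  -- general frobSq expansion
  have hfrob : ∀ R : Matrix (Fin 3) (Fin 3) ℝ, Rᵀ * R = 1 →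
      frobSq (A - R) = ∑ i, α i ^ 2 - 2 * (Rᵀ * A).trace + 3 := by
    intro R hRR
    rw [frobSq_eq_trace]
    have expand : (A - R)ᵀ * (A - R) = Aᵀ * A - Aᵀ * R - Rᵀ * A + Rᵀ * R := by
      rw [Matrix.transpose_sub]; noncomm_ring
    rw [expand, hRR]
    have h1 : (Aᵀ * R).trace = (Rᵀ * A).trace := by
      rw [← Matrix.trace_transpose (Aᵀ * R), Matrix.transpose_mul, Matrix.transpose_transpose]
    simp only [Matrix.trace_add, Matrix.trace_sub, htrAA, h1, Matrix.trace_one]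
    simp
    ring
  -- trace(Rᵀ A) ≤ ∑ α i for R ∈ SO3, with equality for R₀
  have htrace : ∀ R : Matrix (Fin 3) (Fin 3) ℝ, Rᵀ * R = 1 →
      (Rᵀ * A).trace = ((Uᵀ * Rᵀ * R₀ * U) * Matrix.diagonal α).trace := by
    intro R hRR
    rw [hpolar, hdiag]
    rw [show Rᵀ * (R₀ * (U * Matrix.diagonal α * Uᵀ))
        = (Rᵀ * R₀ * U * Matrix.diagonal α) * Uᵀ by noncomm_ring]
    rw [Matrix.trace_mul_comm]
    rw [show Uᵀ * (Rᵀ * R₀ * U * Matrix.diagonal α)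
        = (Uᵀ * Rᵀ * R₀ * U) * Matrix.diagonal α by noncomm_ring]
  have hQorth : ∀ R : Matrix (Fin 3) (Fin 3) ℝ, Rᵀ * R = 1 →
      (Uᵀ * Rᵀ * R₀ * U)ᵀ * (Uᵀ * Rᵀ * R₀ * U) = 1 := by
    intro R hRR
    exact orth_mul (orth_mul (orth_mul (orth_transpose hU) (orth_transpose hRR)) hR.1) hU
  have hQD : ∀ Q : Matrix (Fin 3) (Fin 3) ℝ, (Q * Matrix.diagonal α).trace = ∑ i, Q i i * α i := by
    intro Q
    simp [Matrix.trace, Matrix.diag_apply, Matrix.mul_diagonal]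
  have hlb : ∀ R ∈ SO3, ∑ i, (α i - 1) ^ 2 ≤ frobSq (A - R) := by
    intro R hRmem
    rw [hfrob R hRmem.1]
    have h1 : (Rᵀ * A).trace ≤ ∑ i, α i := by
      rw [htrace R hRmem.1, hQD]
      apply Finset.sum_le_sum
      intro i _
      have := orth_diag_le_one (hQorth R hRmem.1) i
      nlinarith [hα i]
    have hexp : ∑ i, (α i - 1) ^ 2 = ∑ i, α i ^ 2 - 2 * ∑ i, α i + 3 := by
      simp [Fin.sum_univ_three]; ring
    rw [hexp]
    linarith
  have heq : frobSq (A - R₀) = ∑ i, (α i - 1) ^ 2 := by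
    rw [hfrob R₀ hR.1]
    have h1 : (R₀ᵀ * A).trace = ∑ i, α i := by
      rw [hpolar, ← Matrix.mul_assoc, hR.1, Matrix.one_mul, hdiag, Matrix.trace_mul_comm,
        ← Matrix.mul_assoc, hU, Matrix.one_mul, Matrix.trace_diagonal]
    rw [h1]
    simp [Fin.sum_univ_three]; ring
  have hbdd : BddBelow {t : ℝ | ∃ R ∈ SO3, t = frobSq (A - R)} := by
    refine ⟨∑ i, (α i - 1) ^ 2, ?_⟩
    rintro t ⟨R, hRm, rfl⟩
    exact hlb R hRm
  have hmem : (∑ i, (α i - 1) ^ 2) ∈ {t : ℝ | ∃ R ∈ SO3, t = frobSq (A - R)} :=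
    ⟨R₀, hR, heq.symm⟩
  have hmain : distSO3Sq A = ∑ i, (α i - 1) ^ 2 := by
    apply le_antisymm
    · exact csInf_le hbdd hmem
    · apply le_csInf ⟨_, hmem⟩
      rintro t ⟨R, hRm, rfl⟩
      exact hlb R hRm
  refine ⟨hmain, ?_⟩
  have h1mem : (1 : Matrix (Fin 3) (Fin 3) ℝ) ∈ SO3 := ⟨by simp, by simp⟩
  exact csInf_le hbdd ⟨1, h1mem, rfl⟩
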